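/- arXiv:2505.23993 — 3 statements merged into one kernel-verified Lean document; each statement's English description precedes it below -/
import Mathlib

section
/- Let A, B, C be finite-dimensional real inner product spaces, and let g : A → B and f : B → C be linear maps satisfying f ∘ g = 0. Define the Hodge Laplacian Δ = f† ∘ f + g ∘ g†, where f† and g† denote the adjoints of f and g. Then the quotient space ker(f) / range(g) is linearly isomorphic to ker(Δ). -/
/-!
On `B`, `⟪Δ x, x⟫ = ‖f x‖² + ‖g† x‖²`, so `ker Δ = ker f ⊓ ker g† = ker f ⊓ (range g)ᗮ`: the
harmonic vectors are exactly the closed vectors orthogonal to the exact ones. Since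
`range g ≤ ker f`, this is the orthogonal complement of `range g` inside `ker f`, whose dimension
is that of `ker f ⧸ range g`.
-/

open LinearMap Module

namespace LinearMap

variable {𝕜 A B C : Type*} [RCLike 𝕜]
  [NormedAddCommGroup A] [InnerProductSpace 𝕜 A] [FiniteDimensional 𝕜 A]
  [NormedAddCommGroup B] [InnerProductSpace 𝕜 B] [FiniteDimensional 𝕜 B]
  [NormedAddCommGroup C] [InnerProductSpace 𝕜 C] [FiniteDimensional 𝕜 C]

theorem re_inner_adjoint_comp_add_comp_adjoint_self (g : A →ₗ[𝕜] B) (f : B →ₗ[𝕜] C) (x : B) :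
    RCLike.re (inner 𝕜 ((adjoint f ∘ₗ f + g ∘ₗ adjoint g) x) x) =
      ‖f x‖ ^ 2 + ‖adjoint g x‖ ^ 2 := by
  rw [add_apply, comp_apply, comp_apply, inner_add_left, adjoint_inner_left,
    ← adjoint_inner_right g, map_add, inner_self_eq_norm_sq, inner_self_eq_norm_sq]

theorem ker_adjoint_comp_add_comp_adjoint (g : A →ₗ[𝕜] B) (f : B →ₗ[𝕜] C) :
    ker (adjoint f ∘ₗ f + g ∘ₗ adjoint g) = ker f ⊓ (range g)ᗮ := by
  rw [orthogonal_range]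
  ext x
  simp only [mem_ker, Submodule.mem_inf]
  constructor
  · intro hx
    have hsum := re_inner_adjoint_comp_add_comp_adjoint_self g f x
    rw [hx, inner_zero_left, map_zero, eq_comm,
      add_eq_zero_iff_of_nonneg (sq_nonneg _) (sq_nonneg _)] at hsum
    simpa using hsum
  · rintro ⟨hf, hg⟩
    simp [hf, hg]

end LinearMap

namespace Submodule

variable {𝕜 E : Type*} [RCLike 𝕜] [NormedAddCommGroup E] [InnerProductSpace 𝕜 E]
  [FiniteDimensional 𝕜 E]

theorem finrank_quotient_comap_subtype_eq_finrank_inf_orthogonal {p q : Submodule 𝕜 E}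
    (hpq : p ≤ q) :
    finrank 𝕜 (q ⧸ p.comap q.subtype) = finrank 𝕜 ↥(q ⊓ pᗮ) := by
  have hquot := finrank_quotient_add_finrank (p.comap q.subtype)
  have hcomap := (comapSubtypeEquivOfLe hpq).finrank_eq
  have horth := finrank_add_inf_finrank_orthogonal hpq
  rw [inf_comm] at horth
  omega

end Submodule

/-- For finite-dimensional real inner product spaces `A`, `B`, `C` and linear maps
`g : A → B`, `f : B → C` with `f ∘ g = 0`, the quotient `ker f ⧸ range g` is linearly
isomorphic to the kernel of the Hodge Laplacian `Δ = f† ∘ f + g ∘ g†`. -/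
theorem stmt_0 {A B C : Type*}
    [NormedAddCommGroup A] [InnerProductSpace ℝ A] [FiniteDimensional ℝ A]
    [NormedAddCommGroup B] [InnerProductSpace ℝ B] [FiniteDimensional ℝ B]
    [NormedAddCommGroup C] [InnerProductSpace ℝ C] [FiniteDimensional ℝ C]
    (g : A →ₗ[ℝ] B) (f : B →ₗ[ℝ] C) (hfg : f ∘ₗ g = 0) :
    Nonempty
      ((↥(LinearMap.ker f) ⧸ (LinearMap.range g).comap (LinearMap.ker f).subtype) ≃ₗ[ℝ]
        ↥(LinearMap.ker (LinearMap.adjoint f ∘ₗ f + g ∘ₗ LinearMap.adjoint g))) := by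
  refine ⟨LinearEquiv.ofFinrankEq _ _ ?_⟩
  rw [ker_adjoint_comp_add_comp_adjoint]
  exact Submodule.finrank_quotient_comap_subtype_eq_finrank_inf_orthogonal
    (range_le_ker_iff.mpr hfg)
end

section
/- Let G be a simple graph on vertex set Fin n with decidable adjacency, let r : Fin n → (Fin 3 → ℝ) assign 3D coordinates to vertices, let γ > 0, and assume r i ≠ r j whenever {i,j} is an edge of G. Fix an orientation of the edges, assigning to each edge e the ordered pair (i_e, j_e) with e = {i_e, j_e}. Define the block coboundary matrix B, with rows indexed by edges of G and columns indexed by pairs (v, a) ∈ Fin n × Fin 3, by B e (v, a) = ε · (√γ / ‖r j_e − r i_e‖) · (r j_e a − r i_e a), where ε = 1 if v = i_e, ε = −1 if v = j_e, and B e (v,a) = 0 otherwise, and ‖·‖ is the Euclidean norm on Fin 3 → ℝ. Then the matrix H = Bᵀ * B satisfies: (1) for i ≠ j with {i,j} an edge of G, H (i,a) (j,b) = −(γ / ‖r j − r i‖²) · (r j a − r i a)(r j b − r i b); (2) for i ≠ j with {i,j} not an edge, H (i,a) (j,b) = 0; (3) H (i,a) (i,b) = ∑_{j adjacent to i} (γ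 / ‖r j − r i‖²) · (r j a − r i a)(r j b − r i b). -/
/-!
Write `x_e := (√γ / ‖r j_e - r i_e‖) • (r j_e - r i_e)` for the restriction vector of an edge `e`
oriented as `(i_e, j_e)`, and `D` for the signed incidence matrix of that orientation. Then
`B e (v, a) = D e v * x_e a`, so `(Bᵀ B) (i, a) (j, b) = ∑ e, D e i * D e j * x_e a * x_e b`.
For `i ≠ j` the product `D e i * D e j` is `-1` on the edge `{i, j}` and `0` elsewhere, while
`D e i ^ 2` is the indicator of `i ∈ e`. Reversing the orientation negates `x_e`, so
`x_e a * x_e b = γ / ‖r j - r i‖² * (r j a - r i a) * (r j b - r i b)` whichever way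
`e = {i, j}` is oriented.
-/

open Matrix

namespace SimpleGraph

variable {V : Type*} [DecidableEq V] {G : SimpleGraph V}

def orientedIncMatrix (R : Type*) [Ring R] (o : G.edgeSet → V × V) : Matrix G.edgeSet V R :=
  fun e v => if v = (o e).1 then 1 else if v = (o e).2 then -1 else 0

variable {R : Type*} [Ring R] {o : G.edgeSet → V × V}
  (ho : ∀ e : G.edgeSet, (e : Sym2 V) = s((o e).1, (o e).2))
include ho

theorem orientedIncMatrix_mul_self_apply (e : G.edgeSet) (i : V) :
    orientedIncMatrix R o e i * orientedIncMatrix R o e i =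
      if i ∈ (e : Sym2 V) then 1 else 0 := by
  simp only [ho e, Sym2.mem_iff, orientedIncMatrix]
  split_ifs <;> grind

theorem orientedIncMatrix_mul_apply_of_ne (e : G.edgeSet) {i j : V} (hij : i ≠ j) :
    orientedIncMatrix R o e i * orientedIncMatrix R o e j =
      if (e : Sym2 V) = s(i, j) then -1 else 0 := by
  have hne : (o e).1 ≠ (o e).2 := (G.mem_edgeSet.mp (ho e ▸ e.2)).ne
  simp only [ho e, Sym2.eq_iff, orientedIncMatrix]
  split_ifs <;> grind

variable [Fintype V] [DecidableRel G.Adj]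

theorem sum_orientedIncMatrix_mul_of_ne {i j : V} (hij : i ≠ j) (F : G.edgeSet → R) (c : R)
    (hF : ∀ e : G.edgeSet, (e : Sym2 V) = s(i, j) → F e = c) :
    ∑ e, orientedIncMatrix R o e i * orientedIncMatrix R o e j * F e =
      if G.Adj i j then -c else 0 := by
  simp_rw [orientedIncMatrix_mul_apply_of_ne ho _ hij, ite_mul, neg_one_mul, zero_mul]
  split_ifs with hA
  · rw [Finset.sum_eq_single_of_mem ⟨s(i, j), hA⟩ (Finset.mem_univ _), if_pos rfl, hF _ rfl]
    intro e _ hne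
    exact if_neg fun h => hne (Subtype.ext h)
  · refine Finset.sum_eq_zero fun e _ => if_neg fun h => hA ?_
    simpa [h] using e.2

theorem sum_orientedIncMatrix_mul_self (i : V) (F : G.edgeSet → R) (F' : V → R)
    (hF : ∀ (e : G.edgeSet) (j : V), (e : Sym2 V) = s(i, j) → F e = F' j) :
    ∑ e, orientedIncMatrix R o e i * orientedIncMatrix R o e i * F e =
      ∑ j ∈ G.neighborFinset i, F' j := by
  simp_rw [orientedIncMatrix_mul_self_apply ho, ite_mul, one_mul, zero_mul, ← Finset.sum_filter]
  symm
  refine Finset.sum_bij (fun j hj => ⟨s(i, j), (G.mem_neighborFinset i j).mp hj⟩) ?_ ?_ ?_ ?_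
  · intro j _
    simp
  · intro j₁ _ j₂ _ h
    exact Sym2.congr_right.mp (congrArg Subtype.val h)
  · intro e he
    obtain ⟨j, hj⟩ := Sym2.mem_iff_exists.mp (Finset.mem_filter.mp he).2
    refine ⟨j, ?_, Subtype.ext hj.symm⟩
    rw [G.mem_neighborFinset, ← G.mem_edgeSet, ← hj]
    exact e.2
  · intro j _
    exact (hF _ j rfl).symm

end SimpleGraph

theorem Matrix.transpose_mul_self_apply_of_apply_eq {E V ι R : Type*} [Fintype E]
    [CommSemiring R] {B : Matrix E (V × ι) R} {D : Matrix E V R} {x : E → ι → R}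
    (hB : ∀ e v a, B e (v, a) = D e v * x e a) (i j : V) (a b : ι) :
    (Bᵀ * B) (i, a) (j, b) = ∑ e, D e i * D e j * (x e a * x e b) := by
  simp only [mul_apply, transpose_apply, hB]
  exact Finset.sum_congr rfl fun e _ => by ring

section ANM

variable {V ι : Type*} [Fintype ι] (γ : ℝ) (r : V → ι → ℝ)

noncomputable def anmRestriction (u v : V) (a : ι) : ℝ :=
  √γ / √(∑ c, (r v c - r u c) ^ 2) * (r v a - r u a)

theorem anmRestriction_swap (u v : V) : anmRestriction γ r v u = -anmRestriction γ r u v := by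
  funext a
  have hS : ∑ c, (r u c - r v c) ^ 2 = ∑ c, (r v c - r u c) ^ 2 :=
    Finset.sum_congr rfl fun c _ => by ring
  simp only [anmRestriction, Pi.neg_apply, hS]
  ring

theorem anmRestriction_mul_anmRestriction (hγ : 0 ≤ γ) (u v : V) (a b : ι) :
    anmRestriction γ r u v a * anmRestriction γ r u v b =
      γ / (∑ c, (r v c - r u c) ^ 2) * ((r v a - r u a) * (r v b - r u b)) := by
  have hS : 0 ≤ ∑ c, (r v c - r u c) ^ 2 := by positivity
  have hcoeff : √γ / √(∑ c, (r v c - r u c) ^ 2) * (√γ / √(∑ c, (r v c - r u c) ^ 2)) =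
      γ / ∑ c, (r v c - r u c) ^ 2 := by
    rw [div_mul_div_comm, Real.mul_self_sqrt hγ, Real.mul_self_sqrt hS]
  unfold anmRestriction
  linear_combination (r v a - r u a) * (r v b - r u b) * hcoeff

theorem anmRestriction_mul_anmRestriction_of_mk_eq (hγ : 0 ≤ γ) {u v i j : V}
    (h : s(u, v) = s(i, j)) (a b : ι) :
    anmRestriction γ r u v a * anmRestriction γ r u v b =
      γ / (∑ c, (r j c - r i c) ^ 2) * ((r j a - r i a) * (r j b - r i b)) := by
  rcases Sym2.eq_iff.mp h with ⟨rfl, rfl⟩ | ⟨rfl, rfl⟩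
  · exact anmRestriction_mul_anmRestriction γ r hγ u v a b
  · rw [anmRestriction_swap, Pi.neg_apply, Pi.neg_apply, neg_mul_neg,
      anmRestriction_mul_anmRestriction γ r hγ]

end ANM

theorem stmt_6_general {n : ℕ} (G : SimpleGraph (Fin n)) [DecidableRel G.Adj]
    (r : Fin n → Fin 3 → ℝ) (γ : ℝ) (hγ : 0 < γ)
    (o : G.edgeSet → Fin n × Fin n)
    (ho2 : ∀ e : G.edgeSet, (e : Sym2 (Fin n)) = s((o e).1, (o e).2))
    (B : Matrix G.edgeSet (Fin n × Fin 3) ℝ)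
    (hB : ∀ (e : G.edgeSet) (v : Fin n) (a : Fin 3), B e (v, a) =
      if v = (o e).1 then
        Real.sqrt γ / Real.sqrt (∑ c, (r (o e).2 c - r (o e).1 c) ^ 2) *
          (r (o e).2 a - r (o e).1 a)
      else if v = (o e).2 then
        -(Real.sqrt γ / Real.sqrt (∑ c, (r (o e).2 c - r (o e).1 c) ^ 2) *
          (r (o e).2 a - r (o e).1 a))
      else 0) :
    (∀ (i j : Fin n) (a b : Fin 3), i ≠ j → G.Adj i j →
      (Bᵀ * B) (i, a) (j, b) =
        -(γ / ∑ c, (r j c - r i c) ^ 2) * ((r j a - r i a) * (r j b - r i b))) ∧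
    (∀ (i j : Fin n) (a b : Fin 3), i ≠ j → ¬G.Adj i j → (Bᵀ * B) (i, a) (j, b) = 0) ∧
    (∀ (i : Fin n) (a b : Fin 3), (Bᵀ * B) (i, a) (i, b) =
      ∑ j ∈ G.neighborFinset i,
        γ / (∑ c, (r j c - r i c) ^ 2) * ((r j a - r i a) * (r j b - r i b))) := by
  have hBM : ∀ e v a, B e (v, a) =
      G.orientedIncMatrix ℝ o e v * anmRestriction γ r (o e).1 (o e).2 a := by
    intro e v a
    rw [hB]
    unfold SimpleGraph.orientedIncMatrix anmRestriction
    split_ifs <;> ring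
  have hF : ∀ (e : G.edgeSet) (i j : Fin n) (a b : Fin 3), (e : Sym2 (Fin n)) = s(i, j) →
      anmRestriction γ r (o e).1 (o e).2 a * anmRestriction γ r (o e).1 (o e).2 b =
        γ / (∑ c, (r j c - r i c) ^ 2) * ((r j a - r i a) * (r j b - r i b)) :=
    fun e i j a b he =>
      anmRestriction_mul_anmRestriction_of_mk_eq γ r hγ.le ((ho2 e).symm.trans he) a b
  simp only [transpose_mul_self_apply_of_apply_eq hBM]
  refine ⟨fun i j a b hij hA => ?_, fun i j a b hij hA => ?_, fun i a b => ?_⟩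
  · rw [SimpleGraph.sum_orientedIncMatrix_mul_of_ne ho2 hij _ _ fun e => hF e i j a b,
      if_pos hA, neg_mul]
  · rw [SimpleGraph.sum_orientedIncMatrix_mul_of_ne ho2 hij _ _ fun e => hF e i j a b,
      if_neg hA]
  · exact SimpleGraph.sum_orientedIncMatrix_mul_self ho2 i _ _ (fun e j => hF e i j a b)

/-- The ANM Hessian matrix `H = Bᵀ * B` of the coboundary matrix `B` of the ANM-based
cellular sheaf on a graph embedded in `ℝ³`: its off-diagonal blocks are
`−(γ/‖r j − r i‖²)·(r j a − r i a)(r j b − r i b)` for edges (and `0` for non-edges), and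
its diagonal blocks are the corresponding sums over neighbors. -/
theorem stmt_6 {n : ℕ} (G : SimpleGraph (Fin n)) [DecidableRel G.Adj]
    (r : Fin n → Fin 3 → ℝ) (γ : ℝ) (hγ : 0 < γ)
    (hr : ∀ i j, G.Adj i j → r i ≠ r j)
    (o : G.edgeSet → Fin n × Fin n)
    (ho1 : ∀ e, (o e).1 ≠ (o e).2)
    (ho2 : ∀ e : G.edgeSet, (e : Sym2 (Fin n)) = s((o e).1, (o e).2))
    (B : Matrix G.edgeSet (Fin n × Fin 3) ℝ)
    (hB : ∀ (e : G.edgeSet) (v : Fin n) (a : Fin 3), B e (v, a) =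
      if v = (o e).1 then
        Real.sqrt γ / Real.sqrt (∑ c, (r (o e).2 c - r (o e).1 c) ^ 2) *
          (r (o e).2 a - r (o e).1 a)
      else if v = (o e).2 then
        -(Real.sqrt γ / Real.sqrt (∑ c, (r (o e).2 c - r (o e).1 c) ^ 2) *
          (r (o e).2 a - r (o e).1 a))
      else 0) :
    (∀ (i j : Fin n) (a b : Fin 3), i ≠ j → G.Adj i j →
      (Bᵀ * B) (i, a) (j, b) =
        -(γ / ∑ c, (r j c - r i c) ^ 2) * ((r j a - r i a) * (r j b - r i b))) ∧
    (∀ (i j : Fin n) (a b : Fin 3), i ≠ j → ¬G.Adj i j → (Bᵀ * B) (i, a) (j, b) = 0) ∧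
    (∀ (i : Fin n) (a b : Fin 3), (Bᵀ * B) (i, a) (i, b) =
      ∑ j ∈ G.neighborFinset i,
        γ / (∑ c, (r j c - r i c) ^ 2) * ((r j a - r i a) * (r j b - r i b))) :=
  stmt_6_general G r γ hγ o ho2 B hB
end

section
/- Let V be a finite linearly ordered type, R a commutative ring, and w : Finset V → Rˣ a function into the units of R. For a finset σ and x ∉ σ, define the incidence sign ε(σ, x) = (−1)^{|{y ∈ σ | y < x}|}. Define the weighted operator ∂ on functions f : Finset V → R by (∂f)(σ) = ∑_{x ∉ σ} ε(σ, x) · (w(insert x σ) · w(σ)⁻¹) · f(insert x σ), where the sum is over all x ∈ V not in σ. Then ∂ ∘ ∂ = 0; that is, for every f : Finset V → R and every finset σ, (∂(∂f))(σ) = 0. -/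
/-! Expanding `∂ (∂ f) σ` gives a sum over ordered pairs `(x, y)` of distinct vertices outside `σ`
of terms in `f (insert y (insert x σ))`. The weight ratios telescope to `w (σ ∪ {x, y}) / w σ`,
symmetric in `x, y`, while the product of incidence signs changes sign when `x` and `y` are
swapped, since exactly one of `x < y`, `y < x` holds. So swapping the pair is a sign-reversing
involution without fixed points, and the sum vanishes. -/

open Finset

section WeightedBoundary

variable {V : Type*} [LinearOrder V] {R : Type*} [CommRing R]

variable (R) in
def incidenceSign (σ : Finset V) (x : V) : R :=
  (-1) ^ #(σ.filter (· < x))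

lemma card_filter_lt_insert {σ : Finset V} {x : V} (hx : x ∉ σ) (y : V) :
    #((insert x σ).filter (· < y)) = #(σ.filter (· < y)) + if x < y then 1 else 0 := by
  rw [filter_insert]
  split_ifs <;> simp [card_insert_of_notMem, mem_filter, hx]

lemma incidenceSign_mul_incidenceSign_insert_swap {σ : Finset V} {x y : V} (hxy : x ≠ y)
    (hx : x ∉ σ) (hy : y ∉ σ) :
    incidenceSign R σ x * incidenceSign R (insert x σ) y
      = -(incidenceSign R σ y * incidenceSign R (insert y σ) x) := by
  unfold incidenceSign
  rw [card_filter_lt_insert hx, card_filter_lt_insert hy]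
  rcases hxy.lt_or_gt with h | h
  · rw [if_pos h, if_neg h.not_gt]
    ring
  · rw [if_neg h.not_gt, if_pos h]
    ring

def weightedIncidence (w : Finset V → Rˣ) (σ : Finset V) (x : V) : R :=
  incidenceSign R σ x * ((w (insert x σ) * (w σ)⁻¹ : Rˣ) : R)

lemma weightedIncidence_mul_weightedIncidence_insert_swap (w : Finset V → Rˣ) {σ : Finset V}
    {x y : V} (hxy : x ≠ y) (hx : x ∉ σ) (hy : y ∉ σ) :
    weightedIncidence w σ x * weightedIncidence w (insert x σ) y
      = -(weightedIncidence w σ y * weightedIncidence w (insert y σ) x) := by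
  have hratio (z : V) : ((w (insert z σ) * (w σ)⁻¹ : Rˣ) : R) *
      ((w (insert x (insert y σ)) * (w (insert z σ))⁻¹ : Rˣ) : R)
        = ((w (insert x (insert y σ)) * (w σ)⁻¹ : Rˣ) : R) := by
    simp only [← Units.val_mul, ← div_eq_mul_inv, div_mul_div_cancel']
  have hsign := incidenceSign_mul_incidenceSign_insert_swap (R := R) hxy hx hy
  unfold weightedIncidence
  rw [insert_comm y x σ]
  linear_combination ((w (insert x (insert y σ)) * (w σ)⁻¹ : Rˣ) : R) * hsign
    + incidenceSign R σ x * incidenceSign R (insert x σ) y * hratio x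
    + incidenceSign R σ y * incidenceSign R (insert y σ) x * hratio y

variable [Fintype V]

def weightedBoundary (w : Finset V → Rˣ) (f : Finset V → R) (σ : Finset V) : R :=
  ∑ x ∈ univ.filter (· ∉ σ), weightedIncidence w σ x * f (insert x σ)

theorem weightedBoundary_weightedBoundary (w : Finset V → Rˣ) (f : Finset V → R)
    (σ : Finset V) : weightedBoundary w (weightedBoundary w f) σ = 0 := by
  simp only [weightedBoundary, mul_sum, ← mul_assoc]
  rw [sum_sigma']
  refine sum_involution (fun p _ => ⟨p.2, p.1⟩) ?_ ?_ ?_ fun _ _ => rfl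
  all_goals
    rintro ⟨x, y⟩ hp
    simp only [mem_sigma, mem_filter, mem_univ, true_and, mem_insert, not_or] at hp
    obtain ⟨hx, hyx, hy⟩ := hp
  · rw [weightedIncidence_mul_weightedIncidence_insert_swap w (Ne.symm hyx) hx hy,
      insert_comm y x σ, neg_mul]
    exact neg_add_cancel _
  · exact fun _ h => hyx (congrArg Sigma.fst h)
  · simp only [mem_sigma, mem_filter, mem_univ, true_and, mem_insert, not_or]
    exact ⟨hy, Ne.symm hyx, hx⟩

end WeightedBoundary

/-- The weighted boundary operator with unit weights `w : Finset V → Rˣ` and incidence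
signs `ε(σ, x) = (−1)^{|{y ∈ σ | y < x}|}` squares to zero. -/
theorem stmt_14 {V : Type*} [Fintype V] [LinearOrder V] {R : Type*} [CommRing R]
    (w : Finset V → Rˣ)
    (D : (Finset V → R) → Finset V → R)
    (hD : ∀ (f : Finset V → R) (σ : Finset V),
      D f σ = ∑ x ∈ Finset.univ.filter (· ∉ σ),
        (-1 : R) ^ (σ.filter (· < x)).card *
          ((w (insert x σ) * (w σ)⁻¹ : Rˣ) : R) * f (insert x σ)) :
    ∀ (f : Finset V → R) (σ : Finset V), D (D f) σ = 0 := by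
  obtain rfl : D = weightedBoundary w := funext fun f => funext (hD f)
  exact weightedBoundary_weightedBoundary w
end
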